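/- Relation between arc-length growth and gradient growth (Lemma 4.4): Under the transport setup with θ of class C², fix t₀ ≤ t and let γ : [0, l₀] → ℝ² be a C¹ curve with γ′(β) = ξ(γ(β), t₀) for all β (a level-set segment of θ(·, t₀) of arc length l₀). Assume ∇^⊥θ(γ(β), t₀) ≠ 0 and ∇^⊥θ(X(γ(β), t₀, t), t) ≠ 0 for all β ∈ [0, l₀]. Define l(t) = ∫₀^{l₀} ‖∂_β X(γ(β), t₀, t)‖ dβ (the arc length of the transported segment), Ω_l(t₀) = max_{β} ‖∇^⊥θ(γ(β), t₀)‖, Ω_l(t) = max_{β} ‖∇^⊥θ(X(γ(β), t₀, t), t)‖, m(t₀) = max_{β} |(∇·ξ)(γ(β), t₀)|, and m(t) = max_{β} |(∇·ξ)(X(γ(β), t₀, t), t)|. Then e^{−m(t)·l(t)} · Ω_l(t)/Ω_l(t₀) ≤ l(t)/l₀ ≤ e^{m(t₀)·l₀} · Ω_l(t)/Ω_l(t₀). -/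

import Mathlib

/-!
Along a level curve of `θ(·, t₀)` parametrized by arc length, `γ' = ξ`. Since `θ` is transported
and `det ∇X = 1`, the Jacobian of the flow maps `∇^⊥θ(·, t₀)` to `∇^⊥θ(X(·), t)`, so the
transported curve has speed `Ω_t(β) / Ω₀(β)`, where `Ω₀(β) = ‖∇^⊥θ(γ(β), t₀)‖` and
`Ω_t(β) = ‖∇^⊥θ(X(γ(β)), t)‖`; hence `l(t) = ∫ Ω_t / Ω₀`. Because `∇^⊥θ` is divergence free,
along any curve tangent to `∇^⊥θ` the logarithm of `‖∇^⊥θ‖` changes at rate `-∇·ξ` per unit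
arc length. So `Ω₀` stays within a factor `e^{m(t₀) l₀}` of its maximum, and `Ω_t` within
`e^{m(t) l(t)}` of its maximum, the arc length of the transported curve being `l(t)`.
Inserting these bounds into `∫ Ω_t / Ω₀` gives the two inequalities.
-/

noncomputable section
open Real

/-- The plane, with its Euclidean structure. -/
abbrev E2 := EuclideanSpace ℝ (Fin 2)

/-- `v^⊥ = (-v₂, v₁)`. -/
def perp (v : E2) : E2 := (WithLp.equiv 2 (Fin 2 → ℝ)).symm ![-(v 1), v 0]

/-- The perpendicular spatial gradient `∇^⊥θ(x,t) = (-∂θ/∂x₂, ∂θ/∂x₁)`. -/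
def perpGrad (θ : E2 → ℝ → ℝ) (t : ℝ) (x : E2) : E2 :=
  perp (gradient (fun y => θ y t) x)

/-- The unit direction field `ξ = ∇^⊥θ / ‖∇^⊥θ‖` (where `∇^⊥θ ≠ 0`). -/
def xi (θ : E2 → ℝ → ℝ) (t : ℝ) (x : E2) : E2 :=
  ‖perpGrad θ t x‖⁻¹ • perpGrad θ t x

/-- The divergence `∇·ξ` of the direction field at time `t`. -/
def divXi (θ : E2 → ℝ → ℝ) (t : ℝ) (x : E2) : ℝ :=
  ∑ i : Fin 2, (fderiv ℝ (fun y => xi θ t y) x (EuclideanSpace.single i 1)) i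

open Set
open scoped RealInnerProductSpace

lemma EuclideanSpace.fderiv_coord {ι E : Type*} [Fintype ι] [NormedAddCommGroup E]
    [NormedSpace ℝ E] {W : E → EuclideanSpace ℝ ι} {x : E} (hW : DifferentiableAt ℝ W x)
    (v : E) (i : ι) : fderiv ℝ (fun y => W y i) x v = fderiv ℝ W x v i :=
  congrArg (· v) ((PiLp.hasFDerivAt_apply 2 (W x) i).comp x hW.hasFDerivAt).fderiv

lemma EuclideanSpace.sum_map_single_mul {ι : Type*} [Fintype ι] [DecidableEq ι]
    (φ : EuclideanSpace ℝ ι →L[ℝ] ℝ) (v : EuclideanSpace ℝ ι) :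
    ∑ i, φ (EuclideanSpace.single i 1) * v i = φ v := by
  conv_rhs => rw [← (EuclideanSpace.basisFun ι ℝ).toBasis.sum_repr v]
  simp [map_sum, mul_comm]

lemma fderiv_fderiv_apply {E F : Type*} [NormedAddCommGroup E] [NormedSpace ℝ E]
    [NormedAddCommGroup F] [NormedSpace ℝ F] {f : E → F} {x : E}
    (hf : DifferentiableAt ℝ (fderiv ℝ f) x) (v w : E) :
    fderiv ℝ (fun y => fderiv ℝ f y w) x v = fderiv ℝ (fderiv ℝ f) x v w := by
  rw [fderiv_clm_apply hf (differentiableAt_const w)]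
  simp

lemma HasFDerivAt.norm_inv {E F : Type*} [NormedAddCommGroup E] [NormedSpace ℝ E]
    [NormedAddCommGroup F] [InnerProductSpace ℝ F] {f : E → F} {f' : E →L[ℝ] F} {x : E}
    (hf : HasFDerivAt f f' x) (h0 : f x ≠ 0) :
    HasFDerivAt (fun y => ‖f y‖⁻¹) (-(‖f x‖ ^ 3)⁻¹ • (innerSL ℝ (f x)).comp f') x := by
  have hn : ‖f x‖ ≠ 0 := norm_ne_zero_iff.2 h0
  have hnorm := hf.norm_sq.sqrt (by positivity)
  simp only [Real.sqrt_sq (norm_nonneg _)] at hnorm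
  refine ((hasDerivAt_inv hn).comp_hasFDerivAt x hnorm).congr_fderiv ?_
  ext v
  simp only [smul_apply, ContinuousLinearMap.comp_apply, innerSL_apply_apply, smul_eq_mul]
  field_simp
  ring

lemma HasDerivAt.log_norm {F : Type*} [NormedAddCommGroup F] [InnerProductSpace ℝ F]
    {c : ℝ → F} {c' : F} {β : ℝ} (hc : HasDerivAt c c' β) (h0 : c β ≠ 0) :
    HasDerivAt (fun b => Real.log ‖c b‖) (⟪c β, c'⟫ / ‖c β‖ ^ 2) β := by
  have hn : ‖c β‖ ≠ 0 := norm_ne_zero_iff.2 h0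
  have h := (hc.norm_sq.log (by positivity)).div_const 2
  simp only [Real.log_pow, Nat.cast_ofNat] at h
  have hlog : (fun b => Real.log ‖c b‖) = fun b => 2 * Real.log ‖c b‖ / 2 := by
    funext b; ring
  rw [hlog]
  exact h.congr_deriv (by ring)

lemma gradient_comp_eq_adjoint {E F : Type*} [NormedAddCommGroup E] [InnerProductSpace ℝ E]
    [CompleteSpace E] [NormedAddCommGroup F] [InnerProductSpace ℝ F] [CompleteSpace F]
    {g : F → ℝ} {φ : E → F} {A : E →L[ℝ] F} {x : E} (hg : DifferentiableAt ℝ g (φ x))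
    (hφ : HasFDerivAt φ A x) :
    gradient (g ∘ φ) x = ContinuousLinearMap.adjoint A (gradient g (φ x)) :=
  ext_inner_right ℝ fun v => by
    rw [inner_gradient_left, ContinuousLinearMap.adjoint_inner_left, inner_gradient_left,
      (hg.hasFDerivAt.comp x hφ).fderiv]
    rfl

lemma transport_eq_along_characteristic {E : Type*} [NormedAddCommGroup E] [NormedSpace ℝ E]
    {u : E → ℝ → E} {θ : E → ℝ → ℝ} (hθ : Differentiable ℝ (fun p : E × ℝ => θ p.1 p.2))
    (htrans : ∀ x t, HasDerivAt (fun s => θ x s) (-(fderiv ℝ (fun y => θ y t) x (u x t))) t)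
    {c : ℝ → E} (hc : ∀ s, HasDerivAt c (u (c s) s) s) (s₁ s₂ : ℝ) :
    θ (c s₁) s₁ = θ (c s₂) s₂ := by
  suffices h : ∀ s, HasDerivAt (fun s => θ (c s) s) 0 s from
    is_const_of_deriv_eq_zero (fun s => (h s).differentiableAt) (fun s => (h s).deriv) s₁ s₂
  intro s
  have hF := (hθ (c s, s)).hasFDerivAt
  set F' := fderiv ℝ (fun p : E × ℝ => θ p.1 p.2) (c s, s)
  have hspace : ∀ v, F' (v, 0) = fderiv ℝ (fun y => θ y s) (c s) v := fun v =>
    (congrArg (· v)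
      (hF.comp (f := fun e => (e, s)) (c s) (hasFDerivAt_prodMk_left (c s) s)).fderiv).symm
  have htime : F' (0, 1) = -fderiv ℝ (fun y => θ y s) (c s) (u (c s) s) :=
    (hF.comp_hasDerivAt (f := fun τ => (c s, τ)) s
      ((hasDerivAt_const s (c s)).prodMk (hasDerivAt_id s))).unique (htrans (c s) s)
  have hchain :=
    hF.comp_hasDerivAt (f := fun τ => (c τ, τ)) s ((hc s).prodMk (hasDerivAt_id s))
  rwa [show ((u (c s) s, 1) : E × ℝ) = (u (c s) s, 0) + (0, 1) by simp, map_add, hspace, htime,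
    add_neg_cancel] at hchain

open MeasureTheory intervalIntegral in
lemma abs_sub_le_integral_of_abs_deriv_le {F g h : ℝ → ℝ} {a b x y : ℝ}
    (hF : ∀ s ∈ Icc a b, HasDerivAt F (g s) s) (hg : ContinuousOn g (Icc a b))
    (hh : ContinuousOn h (Icc a b)) (hgh : ∀ s ∈ Icc a b, |g s| ≤ h s)
    (hx : x ∈ Icc a b) (hy : y ∈ Icc a b) :
    |F y - F x| ≤ ∫ s in a..b, h s := by
  wlog hxy : x ≤ y generalizing x y
  · rw [abs_sub_comm]
    exact this hy hx (le_of_not_ge hxy)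
  have hsub : Icc x y ⊆ Icc a b := Icc_subset_Icc hx.1 hy.2
  have hgi : IntervalIntegrable g volume x y := (hg.mono hsub).intervalIntegrable_of_Icc hxy
  calc |F y - F x| = |∫ s in x..y, g s| := by
        rw [integral_eq_sub_of_hasDerivAt (fun s hs => hF s (hsub (uIcc_of_le hxy ▸ hs))) hgi]
    _ ≤ ∫ s in x..y, |g s| := abs_integral_le_integral_abs hxy
    _ ≤ ∫ s in x..y, h s :=
        integral_mono_on hxy hgi.abs ((hh.mono hsub).intervalIntegrable_of_Icc hxy)
          fun s hs => hgh s (hsub hs)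
    _ ≤ ∫ s in a..b, h s := by
        refine integral_mono_interval hx.1 hxy hy.2 ?_
          (hh.intervalIntegrable_of_Icc (hx.1.trans hx.2))
        filter_upwards [ae_restrict_mem measurableSet_Ioc] with s hs
        exact (abs_nonneg _).trans (hgh s (Ioc_subset_Icc_self hs))

lemma sSup_image_mul_exp_neg_le {f g h : ℝ → ℝ} {a b y : ℝ} (hf : ContinuousOn f (Icc a b))
    (hf0 : ∀ s ∈ Icc a b, 0 < f s) (hfg : ∀ s ∈ Icc a b, HasDerivAt (fun x => log (f x)) (g s) s)
    (hg : ContinuousOn g (Icc a b)) (hh : ContinuousOn h (Icc a b))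
    (hgh : ∀ s ∈ Icc a b, |g s| ≤ h s) (hy : y ∈ Icc a b) :
    sSup (f '' Icc a b) * exp (-∫ s in a..b, h s) ≤ f y := by
  obtain ⟨x, hx, hfx⟩ := (isCompact_Icc.image_of_continuousOn hf).sSup_mem ⟨f y, y, hy, rfl⟩
  have hlog := abs_le.1 (abs_sub_le_integral_of_abs_deriv_le hfg hg hh hgh hx hy)
  rw [← hfx, ← exp_log (hf0 x hx), ← exp_log (hf0 y hy), ← exp_add, exp_le_exp]
  linarith [hlog.1]

section ratio

open MeasureTheory intervalIntegral

variable {Φ Ψ a : ℝ → ℝ} {l : ℝ}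

lemma integral_div_div_le (hl : 0 < l) (hΦ : ContinuousOn Φ (Icc 0 l))
    (hΨ : ContinuousOn Ψ (Icc 0 l)) (hΦ0 : ∀ β ∈ Icc 0 l, 0 < Φ β) (hΨ0 : ∀ β ∈ Icc 0 l, 0 ≤ Ψ β)
    (ha : ContinuousOn a (Icc 0 l))
    (hΦ' : ∀ β ∈ Icc 0 l, HasDerivAt (fun x => log (Φ x)) (-a β) β) :
    (∫ β in (0:ℝ)..l, Ψ β / Φ β) / l ≤
      exp (sSup ((fun β => |a β|) '' Icc 0 l) * l) *
        (sSup (Ψ '' Icc 0 l) / sSup (Φ '' Icc 0 l)) := by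
  set m := sSup ((fun β => |a β|) '' Icc 0 l)
  set M₀ := sSup (Φ '' Icc 0 l)
  set Mt := sSup (Ψ '' Icc 0 l)
  have h0 : (0 : ℝ) ∈ Icc 0 l := left_mem_Icc.2 hl.le
  have hM₀ : 0 < M₀ := (hΦ0 0 h0).trans_le (hΦ.le_sSup_image_Icc h0)
  have hMt : 0 ≤ Mt := (hΨ0 0 h0).trans (hΨ.le_sSup_image_Icc h0)
  have hΦ_low : ∀ β ∈ Icc 0 l, M₀ * exp (-(m * l)) ≤ Φ β := fun β hβ => by
    have h := sSup_image_mul_exp_neg_le hΦ hΦ0 hΦ' ha.neg continuousOn_const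
      (fun s hs => (abs_neg (a s)).trans_le (ha.abs.le_sSup_image_Icc hs)) hβ
    simpa [mul_comm] using h
  have hbound : ∀ β ∈ Icc 0 l, Ψ β / Φ β ≤ Mt / (M₀ * exp (-(m * l))) := fun β hβ =>
    div_le_div₀ hMt (hΨ.le_sSup_image_Icc hβ) (by positivity) (hΦ_low β hβ)
  calc (∫ β in (0:ℝ)..l, Ψ β / Φ β) / l
      ≤ (∫ _ in (0:ℝ)..l, Mt / (M₀ * exp (-(m * l)))) / l := by
        gcongr
        exact integral_mono_on hl.le
          ((hΨ.div hΦ fun β hβ => (hΦ0 β hβ).ne').intervalIntegrable_of_Icc hl.le)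
          intervalIntegrable_const hbound
    _ = exp (m * l) * (Mt / M₀) := by
        rw [intervalIntegral.integral_const, smul_eq_mul, sub_zero, exp_neg]
        field_simp

lemma exp_mul_le_integral_div_div (hl : 0 < l) (hΦ : ContinuousOn Φ (Icc 0 l))
    (hΨ : ContinuousOn Ψ (Icc 0 l)) (hΦ0 : ∀ β ∈ Icc 0 l, 0 < Φ β) (hΨ0 : ∀ β ∈ Icc 0 l, 0 < Ψ β)
    (ha : ContinuousOn a (Icc 0 l))
    (hΨ' : ∀ β ∈ Icc 0 l, HasDerivAt (fun x => log (Ψ x)) (-a β * (Ψ β / Φ β)) β) :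
    exp (-(sSup ((fun β => |a β|) '' Icc 0 l) * ∫ β in (0:ℝ)..l, Ψ β / Φ β)) *
        (sSup (Ψ '' Icc 0 l) / sSup (Φ '' Icc 0 l)) ≤
      (∫ β in (0:ℝ)..l, Ψ β / Φ β) / l := by
  set m := sSup ((fun β => |a β|) '' Icc 0 l)
  set M₀ := sSup (Φ '' Icc 0 l)
  set Mt := sSup (Ψ '' Icc 0 l)
  set L := ∫ β in (0:ℝ)..l, Ψ β / Φ β
  have hq : ContinuousOn (fun β => Ψ β / Φ β) (Icc 0 l) :=
    hΨ.div hΦ fun β hβ => (hΦ0 β hβ).ne'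
  have hq0 : ∀ β ∈ Icc 0 l, 0 ≤ Ψ β / Φ β := fun β hβ => (div_pos (hΨ0 β hβ) (hΦ0 β hβ)).le
  have hΨ_low : ∀ β ∈ Icc 0 l, Mt * exp (-(m * L)) ≤ Ψ β := fun β hβ => by
    have h := sSup_image_mul_exp_neg_le (h := fun β => m * (Ψ β / Φ β)) hΨ hΨ0 hΨ'
      (ha.neg.mul hq) (continuousOn_const.mul hq)
      (fun s hs => by
        rw [abs_mul, abs_neg, abs_of_nonneg (hq0 s hs)]
        exact mul_le_mul_of_nonneg_right (ha.abs.le_sSup_image_Icc hs) (hq0 s hs)) hβ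
    rwa [intervalIntegral.integral_const_mul] at h
  have hbound : ∀ β ∈ Icc 0 l, Mt * exp (-(m * L)) / M₀ ≤ Ψ β / Φ β := fun β hβ =>
    div_le_div₀ (hΨ0 β hβ).le (hΨ_low β hβ) (hΦ0 β hβ) (hΦ.le_sSup_image_Icc hβ)
  calc exp (-(m * L)) * (Mt / M₀) = (∫ _ in (0:ℝ)..l, Mt * exp (-(m * L)) / M₀) / l := by
        rw [intervalIntegral.integral_const, smul_eq_mul, sub_zero]
        field_simp
    _ ≤ L / l := by
        gcongr
        exact integral_mono_on hl.le intervalIntegrable_const (hq.intervalIntegrable_of_Icc hl.le)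
          hbound

end ratio

lemma perp_apply_zero (v : E2) : perp v 0 = -v 1 := rfl

lemma perp_apply_one (v : E2) : perp v 1 = v 0 := rfl

lemma E2.apply_eq_inner (v : E2) (i : Fin 2) : v i = ⟪v, EuclideanSpace.single i 1⟫ := by
  simp [EuclideanSpace.inner_single_right]

lemma E2.inner_eq (v w : E2) : ⟪v, w⟫ = v 0 * w 0 + v 1 * w 1 := by
  simp [PiLp.inner_apply, Fin.sum_univ_two, mul_comm]

lemma E2.eq_add_smul (v : E2) :
    v = v 0 • EuclideanSpace.single 0 1 + v 1 • EuclideanSpace.single 1 1 := by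
  ext i; fin_cases i <;> simp

lemma E2.ext_of {v w : E2} (h0 : v 0 = w 0) (h1 : v 1 = w 1) : v = w := by
  ext i; fin_cases i
  exacts [h0, h1]

lemma E2.gradient_apply (f : E2 → ℝ) (x : E2) (i : Fin 2) :
    gradient f x i = fderiv ℝ f x (EuclideanSpace.single i 1) := by
  rw [E2.apply_eq_inner, inner_gradient_left]

lemma ContinuousLinearMap.det_E2 (A : E2 →L[ℝ] E2) :
    A.det = A (EuclideanSpace.single 0 1) 0 * A (EuclideanSpace.single 1 1) 1
      - A (EuclideanSpace.single 0 1) 1 * A (EuclideanSpace.single 1 1) 0 := by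
  rw [ContinuousLinearMap.det,
    ← LinearMap.det_toMatrix (EuclideanSpace.basisFun (Fin 2) ℝ).toBasis, Matrix.det_fin_two]
  simp [LinearMap.toMatrix_apply]
  ring

-- the cofactor identity `A J Aᵀ = (det A) J` for the quarter turn `J = perp`
lemma map_perp_adjoint (A : E2 →L[ℝ] E2) (hA : A.det = 1) (g : E2) :
    A (perp (ContinuousLinearMap.adjoint A g)) = perp g := by
  have hAv : ∀ v : E2, A v =
      v 0 • A (EuclideanSpace.single 0 1) + v 1 • A (EuclideanSpace.single 1 1) := fun v => by
    conv_lhs => rw [E2.eq_add_smul v]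
    simp
  have hAg : ∀ i, ContinuousLinearMap.adjoint A g i = ⟪g, A (EuclideanSpace.single i 1)⟫ :=
    fun i => by rw [E2.apply_eq_inner, ContinuousLinearMap.adjoint_inner_left]
  rw [A.det_E2] at hA
  rw [hAv, perp_apply_zero, perp_apply_one, hAg, hAg, E2.inner_eq, E2.inner_eq]
  apply E2.ext_of
  · simp only [PiLp.add_apply, PiLp.smul_apply, smul_eq_mul, perp_apply_zero]
    linear_combination (-g 1) * hA
  · simp only [PiLp.add_apply, PiLp.smul_apply, smul_eq_mul, perp_apply_one]
    linear_combination (g 0) * hA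

section perpGrad

variable {θ : E2 → ℝ → ℝ} {r : ℝ}

lemma perpGrad_apply_zero (x : E2) :
    perpGrad θ r x 0 = -fderiv ℝ (fun y => θ y r) x (EuclideanSpace.single 1 1) := by
  rw [perpGrad, perp_apply_zero, E2.gradient_apply]

lemma perpGrad_apply_one (x : E2) :
    perpGrad θ r x 1 = fderiv ℝ (fun y => θ y r) x (EuclideanSpace.single 0 1) := by
  rw [perpGrad, perp_apply_one, E2.gradient_apply]

lemma contDiff_perpGrad (hθ : ContDiff ℝ 2 (fun y => θ y r)) : ContDiff ℝ 1 (perpGrad θ r) := by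
  have hD : ContDiff ℝ 1 (fderiv ℝ (fun y => θ y r)) := hθ.fderiv_right (by norm_num)
  refine contDiff_euclidean.2 fun i => ?_
  fin_cases i
  · simp only [Fin.zero_eta, perpGrad_apply_zero]
    exact (hD.clm_apply contDiff_const).neg
  · simp only [Fin.mk_one, perpGrad_apply_one]
    exact hD.clm_apply contDiff_const

lemma sum_fderiv_perpGrad_apply_single (hθ : ContDiff ℝ 2 (fun y => θ y r)) (x : E2) :
    ∑ i : Fin 2, fderiv ℝ (perpGrad θ r) x (EuclideanSpace.single i 1) i = 0 := by
  have hW := (contDiff_perpGrad hθ).differentiable one_ne_zero x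
  have hD : DifferentiableAt ℝ (fderiv ℝ (fun y => θ y r)) x :=
    (hθ.fderiv_right (m := 1) (by norm_num)).differentiable one_ne_zero x
  have hsymm := (hθ.contDiffAt (x := x)).isSymmSndFDerivAt (by simp)
  simp only [Fin.sum_univ_two, ← EuclideanSpace.fderiv_coord hW, perpGrad_apply_zero,
    perpGrad_apply_one, fderiv_fun_neg, neg_apply,
    fderiv_fderiv_apply hD, hsymm (EuclideanSpace.single 0 1)]
  ring

lemma divXi_eq (hθ : ContDiff ℝ 2 (fun y => θ y r)) {x : E2}
    (hx : perpGrad θ r x ≠ 0) :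
    divXi θ r x = -⟪perpGrad θ r x, fderiv ℝ (perpGrad θ r) x (perpGrad θ r x)⟫ /
      ‖perpGrad θ r x‖ ^ 3 := by
  have hw := ((contDiff_perpGrad hθ).differentiable one_ne_zero x).hasFDerivAt
  have hxi : HasFDerivAt (fun y => xi θ r y) _ x := (hw.norm_inv hx).smul hw
  rw [divXi, hxi.fderiv]
  simp only [add_apply, smul_apply, ContinuousLinearMap.smulRight_apply, PiLp.add_apply,
    PiLp.smul_apply, smul_eq_mul, mul_assoc, Finset.sum_add_distrib, ← Finset.mul_sum,
    sum_fderiv_perpGrad_apply_single hθ, EuclideanSpace.sum_map_single_mul]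
  simp only [ContinuousLinearMap.comp_apply, innerSL_apply_apply]
  ring

lemma continuousOn_divXi (hθ : ContDiff ℝ 2 (fun y => θ y r)) :
    ContinuousOn (divXi θ r) {x | perpGrad θ r x ≠ 0} := by
  have hw := contDiff_perpGrad hθ
  refine ContinuousOn.congr ?_ fun x hx => divXi_eq hθ hx
  refine ((hw.continuous.inner ((hw.continuous_fderiv one_ne_zero).clm_apply
    hw.continuous)).neg.continuousOn.div (hw.continuous.norm.pow 3).continuousOn ?_)
  exact fun x hx => pow_ne_zero 3 (norm_ne_zero_iff.2 hx)

lemma hasDerivAt_log_norm_perpGrad (hθ : ContDiff ℝ 2 (fun y => θ y r))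
    {c : ℝ → E2} {k β : ℝ} (hc : HasDerivAt c (k • perpGrad θ r (c β)) β)
    (h0 : perpGrad θ r (c β) ≠ 0) :
    HasDerivAt (fun b => log ‖perpGrad θ r (c b)‖)
      (-divXi θ r (c β) * (k * ‖perpGrad θ r (c β)‖)) β := by
  have hw := ((contDiff_perpGrad hθ).differentiable one_ne_zero (c β)).hasFDerivAt
  refine (HasDerivAt.log_norm (hw.comp_hasDerivAt β hc) h0).congr_deriv ?_
  have hn : ‖perpGrad θ r (c β)‖ ≠ 0 := norm_ne_zero_iff.2 h0
  rw [divXi_eq hθ h0, map_smul, inner_smul_right, Function.comp_apply]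
  field_simp

lemma hasDerivAt_log_norm_perpGrad_levelCurve (hθ : ContDiff ℝ 2 (fun y => θ y r))
    {γ : ℝ → E2} {β : ℝ} (hγ : HasDerivAt γ (xi θ r (γ β)) β) (h0 : perpGrad θ r (γ β) ≠ 0) :
    HasDerivAt (fun b => log ‖perpGrad θ r (γ b)‖) (-divXi θ r (γ β)) β := by
  simpa only [inv_mul_cancel₀ (norm_ne_zero_iff.2 h0), mul_one] using
    hasDerivAt_log_norm_perpGrad hθ hγ h0

end perpGrad

section levelCurve

variable {θ : E2 → ℝ → ℝ} {t₀ t : ℝ} {φ : E2 → E2}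

lemma perpGrad_comp_eq_fderiv_apply (hθ : Differentiable ℝ (fun y => θ y t))
    (hφ : Differentiable ℝ φ) (hdet : ∀ a, (fderiv ℝ φ a).det = 1)
    (hinv : ∀ a, θ (φ a) t = θ a t₀) (α : E2) :
    perpGrad θ t (φ α) = fderiv ℝ φ α (perpGrad θ t₀ α) := by
  have hθ₀ : (fun a => θ a t₀) = (fun y => θ y t) ∘ φ := funext fun a => (hinv a).symm
  rw [perpGrad, perpGrad, hθ₀, gradient_comp_eq_adjoint (hθ (φ α)) (hφ α).hasFDerivAt,
    map_perp_adjoint _ (hdet α)]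

lemma hasDerivAt_comp_levelCurve (hθ : Differentiable ℝ (fun y => θ y t))
    (hφ : Differentiable ℝ φ) (hdet : ∀ a, (fderiv ℝ φ a).det = 1)
    (hinv : ∀ a, θ (φ a) t = θ a t₀) {γ : ℝ → E2} {β : ℝ}
    (hγ : HasDerivAt γ (xi θ t₀ (γ β)) β) :
    HasDerivAt (fun b => φ (γ b)) (‖perpGrad θ t₀ (γ β)‖⁻¹ • perpGrad θ t (φ (γ β))) β := by
  have h := (hφ (γ β)).hasFDerivAt.comp_hasDerivAt β hγ
  rwa [xi, map_smul, ← perpGrad_comp_eq_fderiv_apply hθ hφ hdet hinv] at h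

lemma integral_norm_deriv_comp_levelCurve (hθ : Differentiable ℝ (fun y => θ y t))
    (hφ : Differentiable ℝ φ) (hdet : ∀ a, (fderiv ℝ φ a).det = 1)
    (hinv : ∀ a, θ (φ a) t = θ a t₀) {γ : ℝ → E2} {l : ℝ} (hl : 0 ≤ l)
    (hγ : ∀ β ∈ Icc 0 l, HasDerivAt γ (xi θ t₀ (γ β)) β) :
    ∫ β in (0:ℝ)..l, ‖deriv (fun b => φ (γ b)) β‖ =
      ∫ β in (0:ℝ)..l, ‖perpGrad θ t (φ (γ β))‖ / ‖perpGrad θ t₀ (γ β)‖ :=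
  intervalIntegral.integral_congr fun β hβ => by
    rw [uIcc_of_le hl] at hβ
    rw [(hasDerivAt_comp_levelCurve hθ hφ hdet hinv (hγ β hβ)).deriv, norm_smul, norm_inv,
      norm_norm, inv_mul_eq_div]

end levelCurve

theorem arcLength_growth_vs_gradient_growth_general
    (u : E2 → ℝ → E2) (θ : E2 → ℝ → ℝ) (X : E2 → ℝ → ℝ → E2)
    (hθ : ContDiff ℝ 2 (fun p : E2 × ℝ => θ p.1 p.2))
    -- θ solves the transport equation ∂ₜθ + u·∇θ = 0
    (htrans : ∀ x : E2, ∀ t : ℝ,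
      HasDerivAt (fun s => θ x s) (-(fderiv ℝ (fun y => θ y t) x (u x t))) t)
    -- X is the flow map of u
    (hflow : ∀ α : E2, ∀ τ t : ℝ,
      HasDerivAt (fun s => X α τ s) (u (X α τ t) t) t)
    (hinit : ∀ α : E2, ∀ τ : ℝ, X α τ τ = α)
    -- X is C¹ in α, with Jacobian of determinant 1 (incompressibility)
    (hXC1 : ∀ τ t : ℝ, ContDiff ℝ 1 (fun α => X α τ t))
    (hdet : ∀ α : E2, ∀ τ t : ℝ, (fderiv ℝ (fun a => X a τ t) α).det = 1)
    -- a level-set segment of θ(·,t₀) of arc length l₀, parametrized by arc length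
    (t₀ t l₀ : ℝ) (hl₀ : 0 < l₀) (γ : ℝ → E2)
    (hγ : ∀ β ∈ Set.Icc (0:ℝ) l₀, HasDerivAt γ (xi θ t₀ (γ β)) β)
    (hnz₀ : ∀ β ∈ Set.Icc (0:ℝ) l₀, perpGrad θ t₀ (γ β) ≠ 0)
    (hnzt : ∀ β ∈ Set.Icc (0:ℝ) l₀, perpGrad θ t (X (γ β) t₀ t) ≠ 0) :
    Real.exp (-((sSup ((fun β => |divXi θ t (X (γ β) t₀ t)|) '' Set.Icc (0:ℝ) l₀)) *
          (∫ β in (0:ℝ)..l₀, ‖deriv (fun b => X (γ b) t₀ t) β‖))) *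
        ((sSup ((fun β => ‖perpGrad θ t (X (γ β) t₀ t)‖) '' Set.Icc (0:ℝ) l₀)) /
          (sSup ((fun β => ‖perpGrad θ t₀ (γ β)‖) '' Set.Icc (0:ℝ) l₀)))
      ≤ (∫ β in (0:ℝ)..l₀, ‖deriv (fun b => X (γ b) t₀ t) β‖) / l₀ ∧
    (∫ β in (0:ℝ)..l₀, ‖deriv (fun b => X (γ b) t₀ t) β‖) / l₀
      ≤ Real.exp ((sSup ((fun β => |divXi θ t₀ (γ β)|) '' Set.Icc (0:ℝ) l₀)) * l₀) *
        ((sSup ((fun β => ‖perpGrad θ t (X (γ β) t₀ t)‖) '' Set.Icc (0:ℝ) l₀)) /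
          (sSup ((fun β => ‖perpGrad θ t₀ (γ β)‖) '' Set.Icc (0:ℝ) l₀))) := by
  have hθr : ∀ r, ContDiff ℝ 2 (fun y => θ y r) := fun r =>
    hθ.comp (contDiff_id.prodMk contDiff_const)
  have hinv : ∀ a, θ (X a t₀ t) t = θ a t₀ := fun a => by
    simpa only [hinit] using
      transport_eq_along_characteristic (hθ.differentiable two_ne_zero) htrans (hflow a t₀) t t₀
  have hθt := (hθr t).differentiable two_ne_zero
  have hXd := (hXC1 t₀ t).differentiable one_ne_zero
  have hs' : ∀ β ∈ Icc 0 l₀, HasDerivAt (fun b => X (γ b) t₀ t)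
      (‖perpGrad θ t₀ (γ β)‖⁻¹ • perpGrad θ t (X (γ β) t₀ t)) β := fun β hβ =>
    hasDerivAt_comp_levelCurve hθt hXd (hdet · t₀ t) hinv (hγ β hβ)
  have hγc : ContinuousOn γ (Icc 0 l₀) := fun β hβ => (hγ β hβ).continuousAt.continuousWithinAt
  have hsc : ContinuousOn (fun b => X (γ b) t₀ t) (Icc 0 l₀) := fun β hβ =>
    (hs' β hβ).continuousAt.continuousWithinAt
  have hΦ := (contDiff_perpGrad (hθr t₀)).continuous.norm.comp_continuousOn hγc
  have hΨ := (contDiff_perpGrad (hθr t)).continuous.norm.comp_continuousOn hsc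
  have hΦ0 : ∀ β ∈ Icc 0 l₀, 0 < ‖perpGrad θ t₀ (γ β)‖ := fun β hβ => norm_pos_iff.2 (hnz₀ β hβ)
  have hΨ' : ∀ β ∈ Icc 0 l₀, HasDerivAt (fun b => log ‖perpGrad θ t (X (γ b) t₀ t)‖)
      (-divXi θ t (X (γ β) t₀ t) * (‖perpGrad θ t (X (γ β) t₀ t)‖ / ‖perpGrad θ t₀ (γ β)‖)) β :=
    fun β hβ => by
      simpa only [inv_mul_eq_div] using
        hasDerivAt_log_norm_perpGrad (hθr t) (hs' β hβ) (hnzt β hβ)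
  rw [integral_norm_deriv_comp_levelCurve hθt hXd (hdet · t₀ t) hinv hl₀.le hγ]
  exact ⟨exp_mul_le_integral_div_div hl₀ hΦ hΨ hΦ0 (fun β hβ => norm_pos_iff.2 (hnzt β hβ))
      ((continuousOn_divXi (hθr t)).comp hsc hnzt) hΨ',
    integral_div_div_le hl₀ hΦ hΨ hΦ0 (fun β hβ => norm_nonneg _)
      ((continuousOn_divXi (hθr t₀)).comp hγc hnz₀)
      fun β hβ => hasDerivAt_log_norm_perpGrad_levelCurve (hθr t₀) (hγ β hβ) (hnz₀ β hβ)⟩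

/-- Relation between arc-length growth and gradient growth (Lemma 4.4):
`e^{-m(t)l(t)} Ω_l(t)/Ω_l(t₀) ≤ l(t)/l₀ ≤ e^{m(t₀)l₀} Ω_l(t)/Ω_l(t₀)`. -/
theorem arcLength_growth_vs_gradient_growth
    (u : E2 → ℝ → E2) (θ : E2 → ℝ → ℝ) (X : E2 → ℝ → ℝ → E2)
    (hu : ContDiff ℝ 1 (fun p : E2 × ℝ => u p.1 p.2))
    (hθ : ContDiff ℝ 2 (fun p : E2 × ℝ => θ p.1 p.2))
    -- θ solves the transport equation ∂ₜθ + u·∇θ = 0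
    (htrans : ∀ x : E2, ∀ t : ℝ,
      HasDerivAt (fun s => θ x s) (-(fderiv ℝ (fun y => θ y t) x (u x t))) t)
    -- X is the flow map of u
    (hflow : ∀ α : E2, ∀ τ t : ℝ,
      HasDerivAt (fun s => X α τ s) (u (X α τ t) t) t)
    (hinit : ∀ α : E2, ∀ τ : ℝ, X α τ τ = α)
    -- X is C¹ in α, with Jacobian of determinant 1 (incompressibility)
    (hXC1 : ∀ τ t : ℝ, ContDiff ℝ 1 (fun α => X α τ t))
    (hdet : ∀ α : E2, ∀ τ t : ℝ, (fderiv ℝ (fun a => X a τ t) α).det = 1)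
    -- a level-set segment of θ(·,t₀) of arc length l₀, parametrized by arc length
    (t₀ t l₀ : ℝ) (ht : t₀ ≤ t) (hl₀ : 0 < l₀) (γ : ℝ → E2)
    (hγ : ∀ β ∈ Set.Icc (0:ℝ) l₀, HasDerivAt γ (xi θ t₀ (γ β)) β)
    (hnz₀ : ∀ β ∈ Set.Icc (0:ℝ) l₀, perpGrad θ t₀ (γ β) ≠ 0)
    (hnzt : ∀ β ∈ Set.Icc (0:ℝ) l₀, perpGrad θ t (X (γ β) t₀ t) ≠ 0) :
    Real.exp (-((sSup ((fun β => |divXi θ t (X (γ β) t₀ t)|) '' Set.Icc (0:ℝ) l₀)) *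
          (∫ β in (0:ℝ)..l₀, ‖deriv (fun b => X (γ b) t₀ t) β‖))) *
        ((sSup ((fun β => ‖perpGrad θ t (X (γ β) t₀ t)‖) '' Set.Icc (0:ℝ) l₀)) /
          (sSup ((fun β => ‖perpGrad θ t₀ (γ β)‖) '' Set.Icc (0:ℝ) l₀)))
      ≤ (∫ β in (0:ℝ)..l₀, ‖deriv (fun b => X (γ b) t₀ t) β‖) / l₀ ∧
    (∫ β in (0:ℝ)..l₀, ‖deriv (fun b => X (γ b) t₀ t) β‖) / l₀
      ≤ Real.exp ((sSup ((fun β => |divXi θ t₀ (γ β)|) '' Set.Icc (0:ℝ) l₀)) * l₀) *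
        ((sSup ((fun β => ‖perpGrad θ t (X (γ β) t₀ t)‖) '' Set.Icc (0:ℝ) l₀)) /
          (sSup ((fun β => ‖perpGrad θ t₀ (γ β)‖) '' Set.Icc (0:ℝ) l₀))) :=
  arcLength_growth_vs_gradient_growth_general u θ X hθ htrans hflow hinit hXC1 hdet t₀ t l₀ hl₀ γ hγ
    hnz₀ hnzt
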